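/- (Uniqueness of the reduced Gröbner basis) Let K be a field, σ a monomial order on P = K[x₁,…,xₙ], and I ⊆ P a nonzero ideal. Then I has exactly one reduced σ-Gröbner basis, i.e. there is a unique finite subset G of I such that: G is a σ-Gröbner basis of I; every element of G has σ-leading coefficient 1; and for each g ∈ G, no monomial occurring in g is divisible by the σ-leading monomial of any element of G \ {g}. -/

import Mathlib

open MvPolynomial

/-- A monomial order on the exponent vectors `ν →₀ ℕ`: a linear order compatible with
addition and having `0` as least element. -/
structure MonomialOrd (ν : Type) where
  le : (ν →₀ ℕ) → (ν →₀ ℕ) → Prop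
  le_refl : ∀ a, le a a
  le_trans : ∀ a b c, le a b → le b c → le a c
  le_antisymm : ∀ a b, le a b → le b a → a = b
  le_total : ∀ a b, le a b ∨ le b a
  add_le_add : ∀ a b c, le a b → le (a + c) (b + c)
  zero_le : ∀ a, le 0 a

/-- `a` is the σ-largest exponent vector in the support of `f`
(so `X^a` is the σ-leading monomial of `f`). -/
def IsLeadingExp {K : Type} [Field K] {ν : Type} (σ : MonomialOrd ν)
    (f : MvPolynomial ν K) (a : ν →₀ ℕ) : Prop :=
  a ∈ f.support ∧ ∀ b ∈ f.support, σ.le b a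

/-- The leading-term ideal `LT_σ(I)`: the ideal generated by the σ-leading monomials of the
nonzero elements of `I`. -/
noncomputable def ltIdeal {K : Type} [Field K] {ν : Type} (σ : MonomialOrd ν)
    (I : Ideal (MvPolynomial ν K)) : Ideal (MvPolynomial ν K) :=
  Ideal.span { m | ∃ f ∈ I, ∃ a, IsLeadingExp σ f a ∧ m = monomial a (1 : K) }

/-- `G` is a σ-Gröbner basis of `I`: a finite subset of `I` whose σ-leading monomials
generate `LT_σ(I)`. -/
def IsGroebnerBasis {K : Type} [Field K] {ν : Type} (σ : MonomialOrd ν)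
    (I : Ideal (MvPolynomial ν K)) (G : Finset (MvPolynomial ν K)) : Prop :=
  ↑G ⊆ (I : Set (MvPolynomial ν K)) ∧
    Ideal.span { m | ∃ g ∈ G, ∃ a, IsLeadingExp σ g a ∧ m = monomial a (1 : K) } = ltIdeal σ I


/-!
The leading exponents of the nonzero elements of `I` form an upper set `E` of `ℕⁿ`, which by
Dickson's lemma has finitely many minimal elements. For each `e ∈ E`, dividing `X^e` by all
nonzero elements of `I` leaves a remainder `r` with no monomial in `E`, and `X^e - r` is the
only monic element of `I` with leading exponent `e` whose other monomials avoid `E`. In a reduced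
Gröbner basis the leading exponents must be exactly the minimal elements of `E` (they generate
`E`, and reducedness forbids one dividing another), and each element must be that unique monic
element at its leading exponent; conversely these elements form a reduced Gröbner basis.
-/

theorem upperClosure_setOf_minimal {α : Type*} [Preorder α] [WellFoundedLT α] (s : Set α) :
    upperClosure {x | Minimal (· ∈ s) x} = upperClosure s := by
  ext x
  simp only [SetLike.mem_coe, mem_upperClosure, Set.mem_ofPred_eq]
  constructor
  · rintro ⟨a, ha, hax⟩
    exact ⟨a, ha.prop, hax⟩
  · rintro ⟨a, ha, hax⟩
    obtain ⟨b, hba, hb⟩ := exists_minimal_le_of_wellFoundedLT (· ∈ s) a ha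
    exact ⟨b, hb, hba.trans hax⟩

namespace MvPolynomial

theorem span_monomial_image_eq_iff_upperClosure_eq {ν R : Type*} [CommSemiring R] [Nontrivial R]
    {A B : Set (ν →₀ ℕ)} :
    Ideal.span ((monomial · (1 : R)) '' A) = Ideal.span ((monomial · (1 : R)) '' B) ↔
      upperClosure A = upperClosure B := by
  classical
  have mem_span (C : Set (ν →₀ ℕ)) (f : MvPolynomial ν R) :
      f ∈ Ideal.span ((monomial · (1 : R)) '' C) ↔ ∀ c ∈ f.support, c ∈ upperClosure C := by
    simp only [mem_ideal_span_monomial_image, mem_upperClosure]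
  have mem_span_monomial (C : Set (ν →₀ ℕ)) (x : ν →₀ ℕ) :
      monomial x (1 : R) ∈ Ideal.span ((monomial · (1 : R)) '' C) ↔ x ∈ upperClosure C := by
    simp [mem_span, support_monomial]
  constructor
  · intro h
    ext x
    rw [SetLike.mem_coe, SetLike.mem_coe, ← mem_span_monomial, ← mem_span_monomial, h]
  · intro h
    ext f
    rw [mem_span, mem_span, h]

end MvPolynomial

namespace MonomialOrder

open MvPolynomial
open scoped MonomialOrder

variable {ν R K : Type*} (m : MonomialOrder ν)

section CommRing

variable [CommRing R]

theorem degree_eq_of_forall_le {f : MvPolynomial ν R} {d : ν →₀ ℕ} (hd : d ∈ f.support)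
    (h : ∀ c ∈ f.support, c ≼[m] d) : m.degree f = d :=
  m.toSyn.injective <| le_antisymm (m.degree_le_iff.mpr h) (m.le_degree hd)

theorem degree_linearCombination_le {ι : Type*} {b : ι → MvPolynomial ν R}
    {q : ι →₀ MvPolynomial ν R} {d : ν →₀ ℕ} (h : ∀ i, m.degree (b i * q i) ≼[m] d) :
    m.degree (Finsupp.linearCombination _ b q) ≼[m] d := by
  rw [Finsupp.linearCombination_apply, Finsupp.sum]
  refine m.degree_sum_le.trans (Finset.sup_le fun i _ ↦ ?_)
  rw [smul_eq_mul, mul_comm]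
  exact h i

end CommRing

variable [Field K]

def leadingExps (s : Set (MvPolynomial ν K)) : Set (ν →₀ ℕ) :=
  {a | ∃ f ∈ s, f ≠ 0 ∧ m.degree f = a}

theorem isUpperSet_leadingExps (I : Ideal (MvPolynomial ν K)) :
    IsUpperSet (m.leadingExps (I : Set (MvPolynomial ν K))) := by
  classical
  rintro a b hab ⟨f, hfI, hf0, rfl⟩
  have hmon : monomial (b - m.degree f) (1 : K) ≠ 0 := by simp
  refine ⟨monomial (b - m.degree f) 1 * f, I.mul_mem_left _ hfI, mul_ne_zero hmon hf0, ?_⟩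
  rw [m.degree_mul hmon hf0, m.degree_monomial, if_neg one_ne_zero, tsub_add_cancel_of_le hab]

structure IsReducedAt (I : Ideal (MvPolynomial ν K)) (e : ν →₀ ℕ) (g : MvPolynomial ν K) :
    Prop where
  mem : g ∈ I
  monic : m.Monic g
  degree_eq : m.degree g = e
  eq_of_mem_support : ∀ c ∈ g.support, c ∈ m.leadingExps (I : Set (MvPolynomial ν K)) → c = e

variable {m} {I : Ideal (MvPolynomial ν K)}

theorem IsReducedAt.coeff_eq_one {e : ν →₀ ℕ} {g : MvPolynomial ν K}
    (hg : m.IsReducedAt I e g) : g.coeff e = 1 :=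
  hg.degree_eq ▸ hg.monic.coeff_degree

theorem IsReducedAt.unique {e : ν →₀ ℕ} {g₁ g₂ : MvPolynomial ν K}
    (h₁ : m.IsReducedAt I e g₁) (h₂ : m.IsReducedAt I e g₂) : g₁ = g₂ := by
  classical
  by_contra hne
  have hd : g₁ - g₂ ≠ 0 := sub_ne_zero.mpr hne
  have hdE : m.degree (g₁ - g₂) ∈ m.leadingExps (I : Set (MvPolynomial ν K)) :=
    ⟨g₁ - g₂, I.sub_mem h₁.mem h₂.mem, hd, rfl⟩
  have hde : m.degree (g₁ - g₂) ≠ e := by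
    intro h
    have := m.degree_mem_support hd
    rw [h, mem_support_iff, coeff_sub, h₁.coeff_eq_one, h₂.coeff_eq_one, sub_self] at this
    exact this rfl
  rcases Finset.mem_union.mp (support_sub _ g₁ g₂ (m.degree_mem_support hd)) with h | h
  · exact hde (h₁.eq_of_mem_support _ h hdE)
  · exact hde (h₂.eq_of_mem_support _ h hdE)

/-- The reduced element at `e` is `X^e - r`, where `r` is the remainder of `X^e` on division
by all nonzero elements of `I`. -/
theorem exists_isReducedAt {e : ν →₀ ℕ} (he : e ∈ m.leadingExps (I : Set (MvPolynomial ν K))) :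
    ∃ g, m.IsReducedAt I e g := by
  classical
  obtain ⟨q, r, hdiv, hdeg, hr⟩ := m.div_set (B := {b | b ∈ I ∧ b ≠ 0})
    (fun b hb ↦ (m.leadingCoeff_ne_zero_iff.mpr hb.2).isUnit) (monomial e (1 : K))
  have hr_notMem : ∀ c ∈ r.support, c ∉ m.leadingExps (I : Set (MvPolynomial ν K)) := by
    rintro c hc ⟨b, hbI, hb0, rfl⟩
    exact hr _ hc b ⟨hbI, hb0⟩ le_rfl
  have hr_le : ∀ c ∈ r.support, c ≼[m] e := by
    have hq : m.degree (Finsupp.linearCombination _ (fun b : {b | b ∈ I ∧ b ≠ 0} ↦ b.1) q)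
        ≼[m] e :=
      m.degree_linearCombination_le fun b ↦ (hdeg b).trans (m.degree_monomial_le 1)
    rw [← m.degree_le_iff, eq_sub_of_add_eq' hdiv.symm]
    exact m.degree_sub_le.trans (sup_le (m.degree_monomial_le 1) hq)
  have hsupp : ∀ c ∈ (monomial e 1 - r).support, c = e ∨ c ∈ r.support := by
    intro c hc
    rcases Finset.mem_union.mp (support_sub _ _ _ hc) with h | h
    · exact .inl (Finset.mem_singleton.mp (support_monomial_subset h))
    · exact .inr h
  have hcoeff : (monomial e (1 : K) - r).coeff e = 1 := by
    rw [coeff_sub, coeff_monomial, if_pos rfl,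
      notMem_support_iff.mp fun h ↦ hr_notMem e h he, sub_zero]
  have hdegree : m.degree (monomial e (1 : K) - r) = e := by
    refine m.degree_eq_of_forall_le (by simp [hcoeff]) fun c hc ↦ ?_
    rcases hsupp c hc with rfl | h
    · exact le_rfl
    · exact hr_le c h
  refine ⟨monomial e 1 - r, ⟨?_, ?_, hdegree, fun c hc hcE ↦ ?_⟩⟩
  · rw [← eq_sub_of_add_eq hdiv.symm, Finsupp.linearCombination_apply]
    exact I.sum_mem fun b _ ↦ I.mul_mem_left _ b.2.1
  · rw [Monic, leadingCoeff, hdegree, hcoeff]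
  · exact (hsupp c hc).resolve_right fun h ↦ hr_notMem c h hcE

variable (m I) in
structure IsReducedGroebnerBasis (G : Finset (MvPolynomial ν K)) : Prop where
  subset : (G : Set (MvPolynomial ν K)) ⊆ I
  span_eq : Ideal.span ((monomial · (1 : K)) '' m.leadingExps (G : Set (MvPolynomial ν K))) =
    Ideal.span ((monomial · (1 : K)) '' m.leadingExps (I : Set (MvPolynomial ν K)))
  monic : ∀ g ∈ G, m.Monic g
  reduced : ∀ g ∈ G, ∀ g' ∈ G, g' ≠ g → ∀ c ∈ g.support, ¬ m.degree g' ≤ c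

namespace IsReducedGroebnerBasis

variable {G : Finset (MvPolynomial ν K)} (hG : m.IsReducedGroebnerBasis I G)
include hG

theorem exists_degree_le {c : ν →₀ ℕ} (hc : c ∈ m.leadingExps (I : Set (MvPolynomial ν K))) :
    ∃ g ∈ G, m.degree g ≤ c := by
  have hc' : c ∈ upperClosure (m.leadingExps (G : Set (MvPolynomial ν K))) := by
    rw [span_monomial_image_eq_iff_upperClosure_eq.mp hG.span_eq]
    exact subset_upperClosure hc
  obtain ⟨_, ⟨g, hg, -, rfl⟩, hgc⟩ := mem_upperClosure.mp hc'
  exact ⟨g, hg, hgc⟩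

theorem eq_of_degree_le {g g' : MvPolynomial ν K} (hg : g ∈ G) (hg' : g' ∈ G) {c : ν →₀ ℕ}
    (hc : c ∈ g.support) (h : m.degree g' ≤ c) : g' = g := by
  by_contra hne
  exact hG.reduced g hg g' hg' hne c hc h

theorem minimal_degree {g : MvPolynomial ν K} (hg : g ∈ G) :
    Minimal (· ∈ m.leadingExps (I : Set (MvPolynomial ν K))) (m.degree g) := by
  refine ⟨⟨g, hG.subset hg, (hG.monic g hg).ne_zero, rfl⟩, fun a ha hag ↦ ?_⟩
  obtain ⟨g', hg', hg'a⟩ := hG.exists_degree_le ha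
  obtain rfl := hG.eq_of_degree_le hg hg' (m.degree_mem_support (hG.monic g hg).ne_zero)
    (hg'a.trans hag)
  exact hg'a

theorem isReducedAt {g : MvPolynomial ν K} (hg : g ∈ G) : m.IsReducedAt I (m.degree g) g := by
  refine ⟨hG.subset hg, hG.monic g hg, rfl, fun c hc hcE ↦ ?_⟩
  obtain ⟨g', hg', hg'c⟩ := hG.exists_degree_le hcE
  obtain rfl := hG.eq_of_degree_le hg hg' hc hg'c
  exact m.toSyn.injective (le_antisymm (m.le_degree hc) (m.toSyn_monotone hg'c))

theorem exists_degree_eq {e : ν →₀ ℕ}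
    (he : Minimal (· ∈ m.leadingExps (I : Set (MvPolynomial ν K))) e) :
    ∃ g ∈ G, m.degree g = e := by
  obtain ⟨g, hg, hge⟩ := hG.exists_degree_le he.prop
  exact ⟨g, hg, he.eq_of_le (hG.minimal_degree hg).prop hge⟩

theorem subset_of_isReducedGroebnerBasis {G' : Finset (MvPolynomial ν K)}
    (hG' : m.IsReducedGroebnerBasis I G') : G ⊆ G' := by
  intro g hg
  obtain ⟨g', hg', hdeg⟩ := hG'.exists_degree_eq (hG.minimal_degree hg)
  rwa [(hG.isReducedAt hg).unique (hdeg ▸ hG'.isReducedAt hg')]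

end IsReducedGroebnerBasis

variable (m I)

theorem exists_isReducedGroebnerBasis [Finite ν] : ∃ G, m.IsReducedGroebnerBasis I G := by
  classical
  set E := m.leadingExps (I : Set (MvPolynomial ν K))
  have hM : {e | Minimal (· ∈ E) e}.Finite :=
    WellQuasiOrderedLE.finite_of_isAntichain (setOfPred_minimal_antichain _)
  choose! red hred using fun e (he : e ∈ E) ↦ m.exists_isReducedAt he
  have hcoe : (hM.toFinset.image red : Set (MvPolynomial ν K)) =
      red '' {e | Minimal (· ∈ E) e} := by
    simp
  have hexps : m.leadingExps (red '' {e | Minimal (· ∈ E) e}) = {e | Minimal (· ∈ E) e} := by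
    ext a
    constructor
    · rintro ⟨_, ⟨e, he, rfl⟩, -, rfl⟩
      rwa [(hred e he.prop).degree_eq]
    · intro ha
      exact ⟨red a, ⟨a, ha, rfl⟩, (hred a ha.prop).monic.ne_zero, (hred a ha.prop).degree_eq⟩
  refine ⟨hM.toFinset.image red, ⟨?_, ?_, ?_, ?_⟩⟩
  · rw [hcoe]
    rintro _ ⟨e, he, rfl⟩
    exact (hred e he.prop).mem
  · rw [hcoe, hexps, span_monomial_image_eq_iff_upperClosure_eq, upperClosure_setOf_minimal]
  · simp only [Finset.mem_image, Set.Finite.mem_toFinset]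
    rintro _ ⟨e, he, rfl⟩
    exact (hred e he.prop).monic
  · simp only [Finset.mem_image, Set.Finite.mem_toFinset]
    rintro _ ⟨e, he, rfl⟩ _ ⟨e', he', rfl⟩ hne c hc hle
    rw [(hred e' he'.prop).degree_eq] at hle
    obtain rfl := (hred e he.prop).eq_of_mem_support c hc (m.isUpperSet_leadingExps I hle he'.prop)
    exact hne (congrArg red (he.eq_of_le he'.prop hle))

theorem existsUnique_isReducedGroebnerBasis [Finite ν] :
    ∃! G, m.IsReducedGroebnerBasis I G := by
  obtain ⟨G, hG⟩ := m.exists_isReducedGroebnerBasis I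
  exact ⟨G, hG, fun G' hG' ↦ (hG'.subset_of_isReducedGroebnerBasis hG).antisymm
    (hG.subset_of_isReducedGroebnerBasis hG')⟩

end MonomialOrder

namespace MonomialOrd

variable {ν : Type} (σ : MonomialOrd ν)

/-- A copy of `ν →₀ ℕ` ordered by `σ`: the `syn` type of `σ.toMonomialOrder`. -/
def Syn (_σ : MonomialOrd ν) : Type := ν →₀ ℕ

noncomputable instance : AddCommMonoid σ.Syn := inferInstanceAs (AddCommMonoid (ν →₀ ℕ))

noncomputable instance : LinearOrder σ.Syn where
  le := σ.le
  le_refl := σ.le_refl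
  le_trans := σ.le_trans
  le_antisymm := σ.le_antisymm
  le_total := σ.le_total
  toDecidableLE := Classical.decRel _

instance : IsOrderedAddMonoid σ.Syn where
  add_le_add_left a b h c := σ.add_le_add a b c h

noncomputable def toSyn : (ν →₀ ℕ) ≃+ σ.Syn := AddEquiv.refl _

theorem toSyn_monotone : Monotone σ.toSyn := fun a b h ↦ by
  change σ.le a b
  simpa [tsub_add_cancel_of_le h] using σ.add_le_add 0 (b - a) a (σ.zero_le _)

instance [Finite ν] : WellFoundedLT σ.Syn :=
  have : WellQuasiOrderedLE σ.Syn :=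
    σ.toSyn_monotone.wellQuasiOrderedLE_of_wellQuasiOrderedLE_of_surjective σ.toSyn.surjective
  inferInstance

noncomputable def toMonomialOrder [Finite ν] : MonomialOrder ν where
  syn := σ.Syn
  toSyn := σ.toSyn
  toSyn_monotone := σ.toSyn_monotone

variable [Finite ν] {K : Type} [Field K]

theorem isLeadingExp_iff {f : MvPolynomial ν K} {a : ν →₀ ℕ} :
    IsLeadingExp σ f a ↔ f ≠ 0 ∧ σ.toMonomialOrder.degree f = a := by
  constructor
  · rintro ⟨ha, hmax⟩
    exact ⟨support_nonempty.mp ⟨a, ha⟩, σ.toMonomialOrder.degree_eq_of_forall_le ha hmax⟩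
  · rintro ⟨hf, rfl⟩
    exact ⟨σ.toMonomialOrder.degree_mem_support hf, fun b hb ↦ σ.toMonomialOrder.le_degree hb⟩

theorem setOf_isLeadingExp_eq (s : Set (MvPolynomial ν K)) :
    {x | ∃ f ∈ s, ∃ a, IsLeadingExp σ f a ∧ x = monomial a (1 : K)} =
      (monomial · (1 : K)) '' σ.toMonomialOrder.leadingExps s := by
  ext x
  constructor
  · rintro ⟨f, hf, a, hfa, rfl⟩
    obtain ⟨hf0, rfl⟩ := σ.isLeadingExp_iff.mp hfa
    exact ⟨_, ⟨f, hf, hf0, rfl⟩, rfl⟩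
  · rintro ⟨_, ⟨f, hf, hf0, rfl⟩, rfl⟩
    exact ⟨f, hf, _, σ.isLeadingExp_iff.mpr ⟨hf0, rfl⟩, rfl⟩

theorem isGroebnerBasis_iff {I : Ideal (MvPolynomial ν K)} {G : Finset (MvPolynomial ν K)} :
    IsGroebnerBasis σ I G ↔ (G : Set (MvPolynomial ν K)) ⊆ I ∧
      Ideal.span ((monomial · (1 : K)) ''
          σ.toMonomialOrder.leadingExps (G : Set (MvPolynomial ν K))) =
        Ideal.span ((monomial · (1 : K)) ''
          σ.toMonomialOrder.leadingExps (I : Set (MvPolynomial ν K))) := by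
  rw [IsGroebnerBasis, ltIdeal, ← setOf_isLeadingExp_eq, ← setOf_isLeadingExp_eq]
  rfl

theorem exists_isLeadingExp_coeff_eq_one_iff {g : MvPolynomial ν K} :
    (∃ a, IsLeadingExp σ g a ∧ coeff a g = 1) ↔ σ.toMonomialOrder.Monic g := by
  constructor
  · rintro ⟨a, hga, hg⟩
    obtain ⟨-, rfl⟩ := σ.isLeadingExp_iff.mp hga
    exact hg
  · intro hg
    exact ⟨_, σ.isLeadingExp_iff.mpr ⟨hg.ne_zero, rfl⟩, hg.coeff_degree⟩

theorem isReducedGroebnerBasis_iff {I : Ideal (MvPolynomial ν K)}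
    {G : Finset (MvPolynomial ν K)} :
    (IsGroebnerBasis σ I G ∧ (∀ g ∈ G, ∃ a, IsLeadingExp σ g a ∧ coeff a g = 1) ∧
      ∀ g ∈ G, ∀ g' ∈ G, g' ≠ g → ∀ a ∈ g.support, ∀ b, IsLeadingExp σ g' b → ¬ b ≤ a) ↔
      σ.toMonomialOrder.IsReducedGroebnerBasis I G := by
  simp only [isGroebnerBasis_iff, exists_isLeadingExp_coeff_eq_one_iff]
  constructor
  · rintro ⟨⟨hGI, hspan⟩, hmonic, hred⟩
    exact ⟨hGI, hspan, hmonic, fun g hg g' hg' hne c hc ↦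
      hred g hg g' hg' hne c hc _ (σ.isLeadingExp_iff.mpr ⟨(hmonic g' hg').ne_zero, rfl⟩)⟩
  · rintro ⟨hGI, hspan, hmonic, hred⟩
    refine ⟨⟨hGI, hspan⟩, hmonic, fun g hg g' hg' hne c hc b hb ↦ ?_⟩
    obtain ⟨-, rfl⟩ := σ.isLeadingExp_iff.mp hb
    exact hred g hg g' hg' hne c hc

end MonomialOrd

theorem reduced_groebner_basis_unique_general {K : Type} [Field K] {n : ℕ}
    (σ : MonomialOrd (Fin n)) (I : Ideal (MvPolynomial (Fin n) K)) :
    ∃! G : Finset (MvPolynomial (Fin n) K),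
      IsGroebnerBasis σ I G ∧
      (∀ g ∈ G, ∃ a, IsLeadingExp σ g a ∧ MvPolynomial.coeff a g = 1) ∧
      (∀ g ∈ G, ∀ g' ∈ G, g' ≠ g →
        ∀ a ∈ g.support, ∀ b, IsLeadingExp σ g' b → ¬ b ≤ a) := by
  simpa only [σ.isReducedGroebnerBasis_iff] using
    σ.toMonomialOrder.existsUnique_isReducedGroebnerBasis I

/-- uniqueness of the reduced Gröbner basis: a nonzero ideal has exactly one
reduced σ-Gröbner basis: a σ-Gröbner basis all of whose elements are monic (σ-leading
coefficient 1) and such that no monomial occurring in an element `g` is divisible by the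
σ-leading monomial of another element. -/
theorem reduced_groebner_basis_unique {K : Type} [Field K] {n : ℕ}
    (σ : MonomialOrd (Fin n)) (I : Ideal (MvPolynomial (Fin n) K)) (hI : I ≠ ⊥) :
    ∃! G : Finset (MvPolynomial (Fin n) K),
      IsGroebnerBasis σ I G ∧
      (∀ g ∈ G, ∃ a, IsLeadingExp σ g a ∧ MvPolynomial.coeff a g = 1) ∧
      (∀ g ∈ G, ∀ g' ∈ G, g' ≠ g →
        ∀ a ∈ g.support, ∀ b, IsLeadingExp σ g' b → ¬ b ≤ a) :=
  reduced_groebner_basis_unique_general σ I
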